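/- Let d ≥ 1 and suppose D has finite support U ⊂ ℤ^d, with rad(U) = max_{x∈U} x₁ > 0. For z ∈ (0,1), let Ω_z = {μ ∈ ℝ^d : ∑_x S_z(x)e^{μ·x} < ∞}, m_z = sup{t ≥ 0 : ∑_x S_z(x)e^{t x₁} < ∞}, and |x|_z = m_z⁻¹ sup_{μ∈Ω̄_z} μ·x. Then for every x ∈ ℝ^d on the boundary of the convex hull of U, there exist C > 0 and z₀ ∈ (0,1) such that | |x|_z − rad(U) | ≤ C/m_z for all z ∈ (0, z₀). In particular, lim_{z→0⁺} |x|_z exists for all x ∈ ℝ^d and defines a norm on ℝ^d whose unit ball is conv(U)/rad(U). -/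

import Mathlib

open scoped BigOperators ENNReal Real Topology Pointwise
open MeasureTheory Matrix Filter

noncomputable section

namespace OZpaper

variable {d : ℕ}

/-- Dot product of a real vector with a lattice point. -/
def rdotZ (μ : Fin d → ℝ) (x : Fin d → ℤ) : ℝ := ∑ i, μ i * (x i : ℝ)

/-- Dot product of two real vectors. -/
def rdot (μ x : Fin d → ℝ) : ℝ := ∑ i, μ i * x i

/-- Euclidean norm of a lattice point. -/
def enormZ (x : Fin d → ℤ) : ℝ := Real.sqrt (∑ i, ((x i : ℝ)) ^ 2)

/-- Euclidean norm of a real vector. -/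
def enormR (x : Fin d → ℝ) : ℝ := Real.sqrt (∑ i, (x i) ^ 2)

/-- ℓ¹ norm of a real vector. -/
def l1R (x : Fin d → ℝ) : ℝ := ∑ i, |x i|

/-- ℓ∞ norm of a real vector. -/
def linftyR (x : Fin d → ℝ) : ℝ := ⨆ i, |x i|

/-- The vector `t • e₁`. -/
def e1R (d : ℕ) (t : ℝ) : Fin d → ℝ := fun i => if (i : ℕ) = 0 then t else 0

/-- The lattice point `n • e₁`. -/
def e1Z (d : ℕ) (n : ℤ) : Fin d → ℤ := fun i => if (i : ℕ) = 0 then n else 0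

/-- Cast of a lattice point to a real vector. -/
def toR (x : Fin d → ℤ) : Fin d → ℝ := fun i => (x i : ℝ)

/-- ℤ^d-symmetry: invariance under coordinate permutations and sign flips. -/
def ZdSymmetric (f : (Fin d → ℤ) → ℝ) : Prop :=
  (∀ (σ : Equiv.Perm (Fin d)) (x : Fin d → ℤ), f (fun i => x (σ i)) = f x) ∧
  (∀ (ε : Fin d → Bool) (x : Fin d → ℤ), f (fun i => if ε i then -(x i) else x i) = f x)

/-- Tilted susceptibility `χ^{(μ)}`, valued in `ℝ≥0∞`. -/
def chi (S : (Fin d → ℤ) → ℝ) (μ : Fin d → ℝ) : ℝ≥0∞ :=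
  ∑' x, ENNReal.ofReal (S x * Real.exp (rdotZ μ x))

/-- The set `Ω = {μ : χ^{(μ)} < ∞}`. -/
def Omega (S : (Fin d → ℤ) → ℝ) : Set (Fin d → ℝ) := {μ | chi S μ < ⊤}

/-- The mass `m_S`. -/
def mass (S : (Fin d → ℤ) → ℝ) : ℝ := sSup {t : ℝ | 0 ≤ t ∧ chi S (e1R d t) < ⊤}

/-- Assumption Ω. -/
structure AssumptionOmega (S : (Fin d → ℤ) → ℝ) : Prop where
  nonneg : ∀ x, 0 ≤ S x
  symm : ZdSymmetric S
  open_Omega : IsOpen (Omega S)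
  zero_mem : (0 : Fin d → ℝ) ∈ Omega S
  exists_not_mem : ∃ μ₁ : ℝ, 0 < μ₁ ∧ e1R d μ₁ ∉ Omega S

/-- Fourier transform `Q̂(k) = ∑_y Q(y) e^{-i k·y}`. -/
def fourierZ (Q : (Fin d → ℤ) → ℝ) (k : Fin d → ℝ) : ℂ :=
  ∑' y, (Q y : ℂ) * Complex.exp (-Complex.I * (rdotZ k y : ℂ))

/-- ℓ^p norm of a function on ℤ^d, valued in `ℝ≥0∞`. -/
def lpNorm (f : (Fin d → ℤ) → ℝ) (p : ℝ) : ℝ≥0∞ :=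
  (∑' y, ENNReal.ofReal (|f y| ^ p)) ^ (1 / p)

/-- The exponent `p_d`. -/
def pExp (d : ℕ) (ζ : ℝ) : ℝ := if d = 1 then 2 else (d : ℝ) / ((d : ℝ) - 2 + min ζ 2)

/-- The class 𝒬_{M,K,ζ} without the (d-1)-th moment bounds. -/
structure MemQweak (M K ζ : ℝ) (Q g : (Fin d → ℤ) → ℝ) : Prop where
  Q_l1 : lpNorm Q 1 ≤ ENNReal.ofReal M
  Q_moment : lpNorm (fun y => enormZ y ^ (2 + ζ) * Q y) 1 ≤ ENNReal.ofReal M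
  infrared : ∀ k : Fin d → ℝ, (∀ i, |k i| ≤ π) →
    K * enormR k ^ 2 ≤ (fourierZ Q 0 - fourierZ Q k).re
  g_l1 : lpNorm g 1 ≤ ENNReal.ofReal M
  g_zeta : lpNorm (fun y => enormZ y ^ ζ * g y) 1 ≤ ENNReal.ofReal M
  g_two : lpNorm (fun y => enormZ y ^ (2 : ℝ) * g y) (min (pExp d ζ) 2) ≤ ENNReal.ofReal M

/-- The class 𝒬_{M,K,ζ}. -/
structure MemQ (M K ζ : ℝ) (Q g : (Fin d → ℤ) → ℝ) : Prop where
  Q_l1 : lpNorm Q 1 ≤ ENNReal.ofReal M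
  Q_moment : lpNorm (fun y => enormZ y ^ (2 + ζ) * Q y) 1 ≤ ENNReal.ofReal M
  infrared : ∀ k : Fin d → ℝ, (∀ i, |k i| ≤ π) →
    K * enormR k ^ 2 ≤ (fourierZ Q 0 - fourierZ Q k).re
  g_l1 : lpNorm g 1 ≤ ENNReal.ofReal M
  g_zeta : lpNorm (fun y => enormZ y ^ ζ * g y) 1 ≤ ENNReal.ofReal M
  g_two : lpNorm (fun y => enormZ y ^ (2 : ℝ) * g y) (min (pExp d ζ) 2) ≤ ENNReal.ofReal M
  Q_dm1 : 4 ≤ d →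
    lpNorm (fun y => enormZ y ^ ((d : ℝ) - 1) * Q y) (min ((d : ℝ) / 3) 2) ≤ ENNReal.ofReal M
  g_dm1 : 4 ≤ d →
    lpNorm (fun y => enormZ y ^ ((d : ℝ) - 1) * g y) 2 ≤ ENNReal.ofReal M

/-- Convolution on ℤ^d. -/
def conv (f g : (Fin d → ℤ) → ℝ) (x : Fin d → ℤ) : ℝ := ∑' y, f (x - y) * g y

/-- Exponential tilt `f^{(μ)}`. -/
def tilt (f : (Fin d → ℤ) → ℝ) (μ : Fin d → ℝ) : (Fin d → ℤ) → ℝ :=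
  fun x => f x * Real.exp (rdotZ μ x)

/-- `∑_y f(y) e^{μ·y}`, i.e. `f̂^{(μ)}(0)`. -/
def tiltSum (f : (Fin d → ℤ) → ℝ) (μ : Fin d → ℝ) : ℝ := ∑' y, f y * Real.exp (rdotZ μ y)

/-- Assumption J. -/
structure AssumptionJ (S J h : (Fin d → ℤ) → ℝ) (M K ζ : ℝ) : Prop where
  M_pos : 0 < M
  K_pos : 0 < K
  zeta_pos : 0 < ζ
  J_symm : ZdSymmetric J
  h_symm : ZdSymmetric h
  J_summable : Summable fun x => |J x|
  h_summable : Summable fun x => |h x|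
  OZ_eq : ∀ x, S x = h x + conv J S x
  memQ : ∀ μ ∈ closure (Omega S), MemQ M K ζ (tilt J μ) (tilt h μ)
  hhat_pos : ∀ μ ∈ closure (Omega S), 0 < tiltSum h μ

/-- Assumption J, without the (d-1)-th moment bounds of the class 𝒬. -/
structure AssumptionJweak (S J h : (Fin d → ℤ) → ℝ) (M K ζ : ℝ) : Prop where
  M_pos : 0 < M
  K_pos : 0 < K
  zeta_pos : 0 < ζ
  J_symm : ZdSymmetric J
  h_symm : ZdSymmetric h
  J_summable : Summable fun x => |J x|
  h_summable : Summable fun x => |h x|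
  OZ_eq : ∀ x, S x = h x + conv J S x
  memQ : ∀ μ ∈ closure (Omega S), MemQweak M K ζ (tilt J μ) (tilt h μ)
  hhat_pos : ∀ μ ∈ closure (Omega S), 0 < tiltSum h μ

/-- `μ` is the optimal tilt `μ_x̂` for direction `x`. -/
def IsOptTilt (S : (Fin d → ℤ) → ℝ) (x μ : Fin d → ℝ) : Prop :=
  μ ∈ frontier (Omega S) ∧ ∀ ν ∈ closure (Omega S), rdot ν x ≤ rdot μ x

/-- The norm `|x|_S = (max_{μ ∈ Ω̄} μ·x)/m_S`. -/
def normS (S : (Fin d → ℤ) → ℝ) (x : Fin d → ℝ) : ℝ :=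
  sSup ((fun μ => rdot μ x) '' closure (Omega S)) / mass S

/-- The drift vector `η` of the tilted kernel. -/
def etaOf (J : (Fin d → ℤ) → ℝ) (μ : Fin d → ℝ) : Fin d → ℝ :=
  fun j => ∑' y, (y j : ℝ) * J y * Real.exp (rdotZ μ y)

/-- The covariance matrix `Λ` of the tilted kernel. -/
def LambdaOf (J : (Fin d → ℤ) → ℝ) (μ : Fin d → ℝ) : Matrix (Fin d) (Fin d) ℝ :=
  Matrix.of fun j l => ∑' y, (y j : ℝ) * (y l : ℝ) * J y * Real.exp (rdotZ μ y)

/-- The Brownian heat kernel `ρ_t(x; η, Λ)`. -/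
def heatKer (d : ℕ) (t : ℝ) (x η : Fin d → ℝ) (Λ : Matrix (Fin d) (Fin d) ℝ) : ℝ :=
  (1 / Real.sqrt Λ.det) * (1 / (2 * π * t) ^ ((d : ℝ) / 2)) *
    Real.exp (-(1 / (2 * t)) * rdot (x - t • η) (Λ⁻¹ *ᵥ (x - t • η)))

/-- The Brownian Green function `𝒞(x; η, Λ)`. -/
def greenC (d : ℕ) (x η : Fin d → ℝ) (Λ : Matrix (Fin d) (Fin d) ℝ) : ℝ :=
  ∫ t in Set.Ioi (0 : ℝ), heatKer d t x η Λ

/-- The massive continuum Green function `𝔾_a(x)`. -/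
def massiveG (d : ℕ) (a : ℝ) (x : Fin d → ℝ) : ℝ :=
  ∫ t in Set.Ioi (0 : ℝ),
    (1 / (2 * π * t) ^ ((d : ℝ) / 2)) * Real.exp (-enormR x ^ 2 / (2 * t)) *
      Real.exp (-(t * a ^ 2) / 2)

/-- The constant `A_φ = ∫_{ℝ^d} ‖y‖₂^φ 𝔾₁(y) dy`. -/
def Aconst (d : ℕ) (φ : ℝ) : ℝ := ∫ y : Fin d → ℝ, enormR y ^ φ * massiveG d 1 y

/-- The torus `[-π, π]^d`. -/
def torus (d : ℕ) : Set (Fin d → ℝ) := Set.univ.pi fun _ => Set.Icc (-π) π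

/-- The Fourier integral `I_t(x)`. -/
def It (Q g : (Fin d → ℤ) → ℝ) (t : ℝ) (x : Fin d → ℤ) : ℂ :=
  (((2 * π) ^ d : ℝ) : ℂ)⁻¹ *
    ∫ k in torus d, Complex.exp (Complex.I * (rdotZ k x : ℂ)) * fourierZ g k *
      Complex.exp (-(t : ℂ) * (fourierZ Q 0 - fourierZ Q k))

/-- The quantity `G_Q(x)`. -/
def GQ (Q g : (Fin d → ℤ) → ℝ) (x : Fin d → ℤ) : ℂ :=
  ∫ t in Set.Ioi (0 : ℝ), It Q g t x

/-- The Kronecker delta at the origin. -/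
def deltaZ (d : ℕ) : (Fin d → ℤ) → ℝ := fun x => if x = 0 then 1 else 0

/-- n-fold convolution power. -/
def convPow (D : (Fin d → ℤ) → ℝ) : ℕ → (Fin d → ℤ) → ℝ
  | 0 => deltaZ d
  | n + 1 => conv D (convPow D n)

/-- Random-walk Green function `S_z(x) = ∑_n z^n D^{*n}(x)`. -/
def rwG (D : (Fin d → ℤ) → ℝ) (z : ℝ) (x : Fin d → ℤ) : ℝ :=
  ∑' n : ℕ, z ^ n * convPow D n x

/-- `σ² = ∑_x ‖x‖₂² J(x)`. -/
def sigmaSq (J : (Fin d → ℤ) → ℝ) : ℝ := ∑' x, enormZ x ^ 2 * J x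

/-- Susceptibility `χ = ∑_x S(x)`. -/
def suscept (S : (Fin d → ℤ) → ℝ) : ℝ := ∑' x, S x

/-- `ĥ(0) = ∑_x h(x)`. -/
def h0 (h : (Fin d → ℤ) → ℝ) : ℝ := ∑' x, h x

/-- Correlation length of order φ. -/
def xiPhi (S : (Fin d → ℤ) → ℝ) (φ : ℝ) : ℝ :=
  ((∑' x, enormZ x ^ φ * S x) / suscept S) ^ (1 / φ)

/-- A critical family of OZ systems. -/
structure CriticalFamily (d : ℕ) (δ zc M K ζ : ℝ) (S J h : ℝ → (Fin d → ℤ) → ℝ) : Prop where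
  δ_pos : 0 < δ
  assumOmega : ∀ z ∈ Set.Ico (zc - δ) zc, AssumptionOmega (S z)
  assumJ : ∀ z ∈ Set.Ico (zc - δ) zc, AssumptionJ (S z) (J z) (h z) M K ζ
  mass_tendsto : Tendsto (fun z => mass (S z)) (𝓝[<] zc) (𝓝 0)

/-- Convolution on ℤ. -/
def convZ (f g : ℤ → ℝ) (x : ℤ) : ℝ := ∑' y, f (x - y) * g y

/-- n-fold convolution power on ℤ. -/
def convZPow (f : ℤ → ℝ) : ℕ → ℤ → ℝ
  | 0 => fun x => if x = 0 then 1 else 0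
  | n + 1 => convZ f (convZPow f n)

/-! ### Auxiliary lemmas for `statement15` -/

section Statement15Aux

set_option linter.unusedSectionVars false

variable {d : ℕ}

lemma rdotZ_add' (μ : Fin d → ℝ) (a b : Fin d → ℤ) :
    rdotZ μ (a + b) = rdotZ μ a + rdotZ μ b := by
  simp [rdotZ, mul_add, Finset.sum_add_distrib]

lemma rdotZ_zero' (μ : Fin d → ℝ) : rdotZ μ 0 = 0 := by simp [rdotZ]

lemma rdotZ_neg' (μ : Fin d → ℝ) (a : Fin d → ℤ) : rdotZ μ (-a) = -rdotZ μ a := by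
  simp [rdotZ, ← Finset.sum_neg_distrib]

lemma rdotZ_sub' (μ : Fin d → ℝ) (a b : Fin d → ℤ) :
    rdotZ μ (a - b) = rdotZ μ a - rdotZ μ b := by
  rw [sub_eq_add_neg, rdotZ_add', rdotZ_neg']; ring

lemma rdot_toR' (μ : Fin d → ℝ) (y : Fin d → ℤ) : rdot μ (toR y) = rdotZ μ y := rfl

lemma rdotZ_zsingle (μ : Fin d → ℝ) (i : Fin d) : rdotZ μ (Pi.single i 1) = μ i := by
  simp [rdotZ, Pi.single_apply]

lemma isLinearMap_rdot (μ : Fin d → ℝ) : IsLinearMap ℝ (rdot μ) := by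
  constructor
  · intro a b; simp [rdot, mul_add, Finset.sum_add_distrib]
  · intro c a; simp [rdot, Finset.mul_sum]
    exact Finset.sum_congr rfl fun i _ => by ring

lemma rdot_smul' (μ : Fin d → ℝ) (c : ℝ) (x : Fin d → ℝ) : rdot μ (c • x) = c * rdot μ x :=
  (isLinearMap_rdot μ).map_smul c x

lemma rdot_smul_left (ν : Fin d → ℝ) (c : ℝ) (x : Fin d → ℝ) :
    rdot (c • ν) x = c * rdot ν x := by
  simp [rdot, Finset.mul_sum]
  exact Finset.sum_congr rfl fun i _ => by ring

lemma rdotZ_smul_left (ν : Fin d → ℝ) (c : ℝ) (y : Fin d → ℤ) :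
    rdotZ (c • ν) y = c * rdotZ ν y := by
  simp [rdotZ, Finset.mul_sum]
  exact Finset.sum_congr rfl fun i _ => by ring

lemma rdotZ_e1R' [NeZero d] (t : ℝ) (y : Fin d → ℤ) : rdotZ (e1R d t) y = t * (y 0 : ℝ) := by
  rw [rdotZ, Finset.sum_eq_single (0 : Fin d)]
  · simp [e1R]
  · intro i _ hi
    have : (i : ℕ) ≠ 0 := fun h => hi (Fin.ext h)
    simp [e1R, this]
  · simp

lemma csSup_mul_image {c : ℝ} (hc : 0 ≤ c) {s : Set ℝ} (hs : s.Nonempty) (hb : BddAbove s) :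
    sSup ((fun t => c * t) '' s) = c * sSup s := by
  rcases eq_or_lt_of_le hc with rfl | hc'
  · have h0 : (fun t : ℝ => (0:ℝ) * t) = fun _ => (0:ℝ) := funext fun t => zero_mul t
    rw [h0, hs.image_const, csSup_singleton, zero_mul]
  · have h1 : IsLUB ((fun t => c * t) '' s) (c * sSup s) := by
      have := (OrderIso.mulLeft₀ c hc').isLUB_image' (s := s) (x := sSup s)
      simpa using this.mpr (isLUB_csSup hs hb)
    exact h1.csSup_eq (hs.image _)

section Dsec

variable {D : (Fin d → ℤ) → ℝ}
  (hpos : ∀ x, 0 ≤ D x) (hsum : Summable D) (hprob : ∑' x, D x = 1)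
  (hfin : {y : Fin d → ℤ | D y ≠ 0}.Finite)

include hsum in
lemma summable_shift (x : Fin d → ℤ) : Summable fun y => D (x - y) :=
  hsum.comp_injective sub_right_injective

include hprob in
lemma tsum_shift (x : Fin d → ℤ) : ∑' y, D (x - y) = 1 := by
  rw [← hprob]
  exact (Equiv.subLeft x).tsum_eq D

include hpos in
lemma convPow_nonneg (n : ℕ) (x : Fin d → ℤ) : 0 ≤ convPow D n x := by
  induction n generalizing x with
  | zero => simp only [convPow, deltaZ]; positivity
  | succ n ih => exact tsum_nonneg fun y => mul_nonneg (hpos _) (ih y)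

include hpos hsum hprob in
lemma convPow_le_one (n : ℕ) (x : Fin d → ℤ) : convPow D n x ≤ 1 := by
  induction n generalizing x with
  | zero => simp only [convPow, deltaZ]; split <;> norm_num
  | succ n ih =>
    calc convPow D (n+1) x = ∑' y, D (x - y) * convPow D n y := rfl
    _ ≤ ∑' y, D (x - y) := by
        refine Summable.tsum_le_tsum (fun y => ?_) ?_ (summable_shift hsum x)
        · nlinarith [hpos (x - y), convPow_nonneg hpos n y, ih y]
        · refine Summable.of_nonneg_of_le (fun y => mul_nonneg (hpos _) (convPow_nonneg hpos n y))
            (fun y => ?_) (summable_shift hsum x)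
          nlinarith [hpos (x - y), convPow_nonneg hpos n y, ih y]
    _ = 1 := tsum_shift hprob x

/-- supports of convolution powers -/
def Sn (A : Finset (Fin d → ℤ)) : ℕ → Finset (Fin d → ℤ)
  | 0 => {0}
  | n + 1 => A + Sn A n

include hfin in
lemma convPow_eq_zero (n : ℕ) (x : Fin d → ℤ) (hx : x ∉ Sn hfin.toFinset n) :
    convPow D n x = 0 := by
  induction n generalizing x with
  | zero =>
    simp only [Sn, Finset.mem_singleton] at hx
    simp [convPow, deltaZ, hx]
  | succ n ih =>
    have h0 : ∀ y, D (x - y) * convPow D n y = 0 := by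
      intro y
      by_cases hg : convPow D n y = 0
      · simp [hg]
      by_cases hD : D (x - y) = 0
      · simp [hD]
      exfalso
      apply hx
      have h1 : x - y ∈ hfin.toFinset := by simpa using hD
      have h2 : y ∈ Sn hfin.toFinset n := by
        by_contra h; exact hg (ih y h)
      simpa [Sn] using Finset.add_mem_add h1 h2
    simp only [convPow, conv]
    simp [h0]

/-- finite tilted sum of D -/
def FF (hfin : {y : Fin d → ℤ | D y ≠ 0}.Finite) (μ : Fin d → ℝ) : ℝ :=
  ∑ y ∈ hfin.toFinset, D y * Real.exp (rdotZ μ y)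

include hpos in
lemma FF_nonneg (μ : Fin d → ℝ) : 0 ≤ FF hfin μ :=
  Finset.sum_nonneg fun y _ => mul_nonneg (hpos y) (Real.exp_nonneg _)

include hprob in
lemma sumA_eq_one : ∑ y ∈ hfin.toFinset, D y = 1 := by
  rw [← hprob, tsum_eq_sum (s := hfin.toFinset) (fun y hy => by simpa using hy)]

include hprob in
lemma FF_zero : FF hfin 0 = 1 := by
  rw [FF, ← sumA_eq_one hprob hfin]
  exact Finset.sum_congr rfl fun y _ => by simp [rdotZ]

include hpos in
lemma single_le_FF (μ : Fin d → ℝ) {y : Fin d → ℤ} (hy : D y ≠ 0) :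
    D y * Real.exp (rdotZ μ y) ≤ FF hfin μ := by
  refine Finset.single_le_sum (f := fun y => D y * Real.exp (rdotZ μ y))
    (fun i _ => mul_nonneg (hpos i) (Real.exp_nonneg _)) ?_
  simpa using hy

include hpos hprob in
lemma FF_le_exp {b : ℝ} (μ : Fin d → ℝ) (h : ∀ y, D y ≠ 0 → rdotZ μ y ≤ b) :
    FF hfin μ ≤ Real.exp b := by
  calc FF hfin μ ≤ ∑ y ∈ hfin.toFinset, D y * Real.exp b := by
        refine Finset.sum_le_sum fun y hy => ?_
        have hyU : D y ≠ 0 := by simpa using hy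
        exact mul_le_mul_of_nonneg_left (Real.exp_le_exp.mpr (h y hyU)) (hpos y)
    _ = Real.exp b := by rw [← Finset.sum_mul, sumA_eq_one hprob hfin, one_mul]

lemma FF_continuous : Continuous (FF hfin) := by
  refine continuous_finset_sum _ fun y _ => continuous_const.mul (Real.continuous_exp.comp ?_)
  exact continuous_finset_sum _ fun i _ => (continuous_apply i).mul continuous_const

include hfin in
lemma tilt_convPow (μ : Fin d → ℝ) (n : ℕ) :
    ∑ x ∈ Sn hfin.toFinset n, convPow D n x * Real.exp (rdotZ μ x) = (FF hfin μ) ^ n := by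
  induction n with
  | zero => simp [Sn, convPow, deltaZ, rdotZ]
  | succ n ih =>
    have hconv : ∀ x, convPow D (n+1) x
        = ∑ y ∈ Sn hfin.toFinset n, D (x - y) * convPow D n y := by
      intro x
      refine tsum_eq_sum fun y hy => ?_
      rw [convPow_eq_zero hfin n y hy, mul_zero]
    calc ∑ x ∈ Sn hfin.toFinset (n+1), convPow D (n+1) x * Real.exp (rdotZ μ x)
        = ∑ x ∈ Sn hfin.toFinset (n+1), ∑ y ∈ Sn hfin.toFinset n,
            (D (x - y) * Real.exp (rdotZ μ (x - y))) * (convPow D n y * Real.exp (rdotZ μ y)) := by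
          refine Finset.sum_congr rfl fun x _ => ?_
          rw [hconv x, Finset.sum_mul]
          refine Finset.sum_congr rfl fun y _ => ?_
          rw [rdotZ_sub', Real.exp_sub]
          have h := Real.exp_ne_zero (rdotZ μ y)
          field_simp
      _ = ∑ y ∈ Sn hfin.toFinset n, (convPow D n y * Real.exp (rdotZ μ y)) *
            ∑ x ∈ Sn hfin.toFinset (n+1), D (x - y) * Real.exp (rdotZ μ (x - y)) := by
          rw [Finset.sum_comm]
          refine Finset.sum_congr rfl fun y _ => ?_
          rw [Finset.mul_sum]
          exact Finset.sum_congr rfl fun x _ => by ring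
      _ = ∑ y ∈ Sn hfin.toFinset n, (convPow D n y * Real.exp (rdotZ μ y)) * FF hfin μ := by
          refine Finset.sum_congr rfl fun y hy => ?_
          congr 1
          have hsub : hfin.toFinset.image (· + y) ⊆ Sn hfin.toFinset (n+1) := by
            intro x hx
            obtain ⟨w, hw, rfl⟩ := Finset.mem_image.mp hx
            exact Finset.add_mem_add hw hy
          rw [← Finset.sum_subset hsub,
            Finset.sum_image (by intro a _ b _ h; exact add_left_injective y h)]
          · exact Finset.sum_congr rfl fun w _ => by simp
          · intro x _ hx
            have hD0 : D (x - y) = 0 := by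
              by_contra hD
              exact hx (Finset.mem_image.mpr ⟨x - y, by simpa using hD, by ring⟩)
            simp [hD0]
      _ = (FF hfin μ) ^ (n+1) := by rw [← Finset.sum_mul, ih]; ring

include hpos hsum hprob hfin in
lemma chi_rwG {z : ℝ} (hz0 : 0 < z) (hz1 : z < 1) (μ : Fin d → ℝ) :
    chi (rwG D z) μ = (1 - ENNReal.ofReal (z * FF hfin μ))⁻¹ := by
  have hsummable : ∀ x, Summable fun n : ℕ => z ^ n * convPow D n x := by
    intro x
    refine Summable.of_nonneg_of_le
      (fun n => mul_nonneg (pow_nonneg hz0.le n) (convPow_nonneg hpos n x))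
      (fun n => ?_) (summable_geometric_of_lt_one hz0.le hz1)
    calc z ^ n * convPow D n x ≤ z ^ n * 1 := by
          have h1 := convPow_le_one hpos hsum hprob n x
          have h2 := convPow_nonneg hpos n x
          nlinarith [pow_nonneg hz0.le n]
      _ = z ^ n := mul_one _
  have step1 : ∀ x, ENNReal.ofReal (rwG D z x * Real.exp (rdotZ μ x))
      = ∑' n : ℕ, ENNReal.ofReal (z ^ n * convPow D n x * Real.exp (rdotZ μ x)) := by
    intro x
    rw [rwG, ← tsum_mul_right]
    rw [ENNReal.ofReal_tsum_of_nonneg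
      (fun n => mul_nonneg (mul_nonneg (pow_nonneg hz0.le n) (convPow_nonneg hpos n x))
        (Real.exp_nonneg _))
      ((hsummable x).mul_right _)]
  calc chi (rwG D z) μ
      = ∑' (x : Fin d → ℤ) (n : ℕ),
          ENNReal.ofReal (z ^ n * convPow D n x * Real.exp (rdotZ μ x)) := by
        rw [chi]; exact tsum_congr step1
    _ = ∑' (n : ℕ) (x : Fin d → ℤ),
          ENNReal.ofReal (z ^ n * convPow D n x * Real.exp (rdotZ μ x)) :=
        ENNReal.tsum_comm
    _ = ∑' n : ℕ, ENNReal.ofReal (z * FF hfin μ) ^ n := by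
        refine tsum_congr fun n => ?_
        rw [tsum_eq_sum (s := Sn hfin.toFinset n) (fun x hx => by
          rw [convPow_eq_zero hfin n x hx]; simp)]
        rw [← ENNReal.ofReal_sum_of_nonneg (fun x _ =>
          mul_nonneg (mul_nonneg (pow_nonneg hz0.le n) (convPow_nonneg hpos n x))
            (Real.exp_nonneg _))]
        have hsum' : ∑ x ∈ Sn hfin.toFinset n, z ^ n * convPow D n x * Real.exp (rdotZ μ x)
            = z ^ n * (FF hfin μ) ^ n := by
          rw [← tilt_convPow hfin μ n, Finset.mul_sum]
          exact Finset.sum_congr rfl fun x _ => by ring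
        rw [hsum', ← mul_pow, ENNReal.ofReal_pow (mul_nonneg hz0.le (FF_nonneg hpos hfin μ))]
    _ = (1 - ENNReal.ofReal (z * FF hfin μ))⁻¹ := ENNReal.tsum_geometric _

include hpos hsum hprob hfin in
lemma mem_Omega_rwG_iff {z : ℝ} (hz0 : 0 < z) (hz1 : z < 1) (μ : Fin d → ℝ) :
    μ ∈ Omega (rwG D z) ↔ z * FF hfin μ < 1 := by
  rw [Omega, Set.mem_setOf_eq, chi_rwG hpos hsum hprob hfin hz0 hz1, ENNReal.inv_lt_top,
    pos_iff_ne_zero, Ne, tsub_eq_zero_iff_le, not_le, ENNReal.ofReal_lt_one]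

include hpos hsum hprob hfin in
lemma closure_Omega_subset {z : ℝ} (hz0 : 0 < z) (hz1 : z < 1) :
    closure (Omega (rwG D z)) ⊆ {μ | z * FF hfin μ ≤ 1} := by
  refine closure_minimal (fun μ hμ =>
    le_of_lt ((mem_Omega_rwG_iff hpos hsum hprob hfin hz0 hz1 μ).mp hμ)) ?_
  exact isClosed_le (continuous_const.mul (FF_continuous hfin)) continuous_const

include hpos hsum hprob hfin in
lemma zero_mem_Omega_rwG {z : ℝ} (hz0 : 0 < z) (hz1 : z < 1) :
    (0 : Fin d → ℝ) ∈ Omega (rwG D z) := by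
  rw [mem_Omega_rwG_iff hpos hsum hprob hfin hz0 hz1, FF_zero hprob hfin, mul_one]
  exact hz1

include hpos hsum hprob hfin in
lemma rdotZ_le_of_mem_closure {z : ℝ} (hz0 : 0 < z) (hz1 : z < 1)
    {μ : Fin d → ℝ} (hμ : μ ∈ closure (Omega (rwG D z))) {y : Fin d → ℤ} (hy : D y ≠ 0) :
    rdotZ μ y ≤ -Real.log z - Real.log (D y) := by
  have hDy : 0 < D y := lt_of_le_of_ne (hpos y) (Ne.symm hy)
  have h1 : z * FF hfin μ ≤ 1 := closure_Omega_subset hpos hsum hprob hfin hz0 hz1 hμ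
  have h2 : D y * Real.exp (rdotZ μ y) ≤ FF hfin μ := single_le_FF hpos hfin μ hy
  have h2' : z * (D y * Real.exp (rdotZ μ y)) ≤ z * FF hfin μ :=
    mul_le_mul_of_nonneg_left h2 hz0.le
  have h3 : Real.exp (rdotZ μ y) ≤ 1 / (z * D y) := by
    rw [le_div_iff₀ (by positivity)]
    nlinarith
  have h4 : rdotZ μ y ≤ Real.log (1 / (z * D y)) :=
    (Real.le_log_iff_exp_le (by positivity)).mpr h3
  rw [one_div, Real.log_inv, Real.log_mul hz0.ne' hDy.ne'] at h4
  linarith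

end Dsec
end Statement15Aux


section Statement15Aux2

set_option linter.unusedSectionVars false

variable {d : ℕ} {D : (Fin d → ℤ) → ℝ}
  (hpos : ∀ x, 0 ≤ D x) (hle : ∀ x, D x ≤ 1) (hsum : Summable D) (hprob : ∑' x, D x = 1)
  (hfin : {y : Fin d → ℤ | D y ≠ 0}.Finite)
  (hDsupp : ∀ L : AddSubgroup (Fin d → ℤ), (∀ x, D x ≠ 0 → x ∈ L) → L = ⊤)
  (hsymD : ∀ y, D (-y) = D y)
  {Dmin : ℝ} (hDmin0 : 0 < Dmin) (hDminle : ∀ y, D y ≠ 0 → Dmin ≤ D y)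

include hpos hsum hprob hfin hDmin0 hDminle in
lemma rdotZ_le_beta {z : ℝ} (hz0 : 0 < z) (hz1 : z < 1)
    {μ : Fin d → ℝ} (hμ : μ ∈ closure (Omega (rwG D z))) {y : Fin d → ℤ} (hy : D y ≠ 0) :
    rdotZ μ y ≤ -Real.log z - Real.log Dmin := by
  have h1 := rdotZ_le_of_mem_closure hpos hsum hprob hfin hz0 hz1 hμ hy
  have hlog : Real.log Dmin ≤ Real.log (D y) := Real.log_le_log hDmin0 (hDminle y hy)
  linarith

include hpos hsum hprob hfin hsymD hDmin0 hDminle in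
lemma abs_rdotZ_le_gen {z : ℝ} (hz0 : 0 < z) (hz1 : z < 1)
    {μ : Fin d → ℝ} (hμ : μ ∈ closure (Omega (rwG D z))) {y : Fin d → ℤ} (hy : D y ≠ 0) :
    |rdotZ μ y| ≤ -Real.log z - Real.log Dmin := by
  have h1 := rdotZ_le_beta hpos hsum hprob hfin hDmin0 hDminle hz0 hz1 hμ hy
  have h2 := rdotZ_le_beta hpos hsum hprob hfin hDmin0 hDminle hz0 hz1 hμ
    (y := -y) (by rw [hsymD]; exact hy)
  rw [rdotZ_neg'] at h2
  rw [abs_le]; constructor <;> linarith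

include hpos hsum hprob hfin hDsupp hsymD hDmin0 hDminle in
lemma coord_bound {z : ℝ} (hz0 : 0 < z) (hz1 : z < 1) (v : Fin d → ℤ) :
    ∃ c : ℝ, 0 ≤ c ∧ ∀ μ ∈ closure (Omega (rwG D z)),
      |rdotZ μ v| ≤ c * (-Real.log z - Real.log Dmin) := by
  have hv : v ∈ AddSubgroup.closure {y | D y ≠ 0} := by
    rw [hDsupp (AddSubgroup.closure {y | D y ≠ 0}) fun x hx => AddSubgroup.subset_closure hx]
    trivial
  refine AddSubgroup.closure_induction
    (p := fun v _ => ∃ c : ℝ, 0 ≤ c ∧ ∀ μ ∈ closure (Omega (rwG D z)),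
      |rdotZ μ v| ≤ c * (-Real.log z - Real.log Dmin)) ?_ ?_ ?_ ?_ hv
  · intro y hy
    exact ⟨1, zero_le_one, fun μ hμ => by
      rw [one_mul]
      exact abs_rdotZ_le_gen hpos hsum hprob hfin hsymD hDmin0 hDminle hz0 hz1 hμ hy⟩
  · exact ⟨0, le_rfl, fun μ hμ => by simp [rdotZ_zero']⟩
  · rintro a b ha hb ⟨c1, hc1, H1⟩ ⟨c2, hc2, H2⟩
    refine ⟨c1 + c2, by positivity, fun μ hμ => ?_⟩
    rw [rdotZ_add', add_mul]
    exact (abs_add_le _ _).trans (add_le_add (H1 μ hμ) (H2 μ hμ))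
  · rintro a ha ⟨c, hc, H⟩
    exact ⟨c, hc, fun μ hμ => by rw [rdotZ_neg', abs_neg]; exact H μ hμ⟩

include hpos hsum hprob hfin hDsupp hsymD hDmin0 hDminle in
lemma bddAbove_rdot {z : ℝ} (hz0 : 0 < z) (hz1 : z < 1) (x : Fin d → ℝ) :
    BddAbove ((fun μ => rdot μ x) '' closure (Omega (rwG D z))) := by
  choose c hc0 hc using fun i : Fin d =>
    coord_bound hpos hsum hprob hfin hDsupp hsymD hDmin0 hDminle hz0 hz1 (Pi.single i 1)
  refine ⟨∑ i, c i * (-Real.log z - Real.log Dmin) * |x i|, ?_⟩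
  rintro _ ⟨μ, hμ, rfl⟩
  calc rdot μ x ≤ ∑ i, c i * (-Real.log z - Real.log Dmin) * |x i| := by
        refine Finset.sum_le_sum fun i _ => ?_
        have h1 : |μ i| ≤ c i * (-Real.log z - Real.log Dmin) := by
          have := hc i μ hμ
          rwa [rdotZ_zsingle] at this
        calc μ i * x i ≤ |μ i * x i| := le_abs_self _
          _ = |μ i| * |x i| := abs_mul _ _
          _ ≤ c i * (-Real.log z - Real.log Dmin) * |x i| :=
              mul_le_mul_of_nonneg_right h1 (abs_nonneg _)

lemma e1R_zero : e1R d (0 : ℝ) = 0 := funext fun i => by simp [e1R]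

section mass

variable [NeZero d] {rad : ℝ} (hrad0 : 0 < rad) {ystar : Fin d → ℤ}
  (hystar : D ystar ≠ 0) (hystar0 : ((ystar 0 : ℤ) : ℝ) = rad)
  (hradmax : ∀ y, D y ≠ 0 → ((y 0 : ℤ) : ℝ) ≤ rad)

include hpos hsum hprob hfin hrad0 hystar hystar0 in
lemma massT_subset {z : ℝ} (hz0 : 0 < z) (hz1 : z < 1) :
    {t : ℝ | 0 ≤ t ∧ chi (rwG D z) (e1R d t) < ⊤} ⊆
      Set.Iic ((-Real.log z - Real.log (D ystar)) / rad) := by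
  intro t ⟨ht0, htchi⟩
  have hDy : 0 < D ystar := lt_of_le_of_ne (hpos ystar) (Ne.symm hystar)
  have hmem : e1R d t ∈ Omega (rwG D z) := htchi
  have h1 := rdotZ_le_of_mem_closure hpos hsum hprob hfin hz0 hz1
    (subset_closure hmem) hystar
  rw [rdotZ_e1R', hystar0] at h1
  rw [Set.mem_Iic, le_div_iff₀ hrad0]
  linarith

include hpos hsum hprob hfin in
lemma zero_mem_massT {z : ℝ} (hz0 : 0 < z) (hz1 : z < 1) :
    (0:ℝ) ∈ {t : ℝ | 0 ≤ t ∧ chi (rwG D z) (e1R d t) < ⊤} := by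
  refine ⟨le_rfl, ?_⟩
  rw [e1R_zero]
  exact zero_mem_Omega_rwG hpos hsum hprob hfin hz0 hz1

include hpos hsum hprob hfin hrad0 hystar hystar0 in
lemma mass_le {z : ℝ} (hz0 : 0 < z) (hz1 : z < 1) :
    mass (rwG D z) ≤ (-Real.log z - Real.log (D ystar)) / rad := by
  refine csSup_le ⟨0, zero_mem_massT hpos hsum hprob hfin hz0 hz1⟩ ?_
  intro t ht
  exact massT_subset hpos hsum hprob hfin hrad0 hystar hystar0 hz0 hz1 ht

include hpos hsum hprob hfin hrad0 hystar hystar0 hradmax in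
lemma mass_ge {z : ℝ} (hz0 : 0 < z) (hz1 : z < 1) :
    -Real.log z / rad ≤ mass (rwG D z) := by
  have hbdd : BddAbove {t : ℝ | 0 ≤ t ∧ chi (rwG D z) (e1R d t) < ⊤} :=
    ⟨_, fun t ht => massT_subset hpos hsum hprob hfin hrad0 hystar hystar0 hz0 hz1 ht⟩
  by_contra h
  push_neg at h
  have hm0 : 0 ≤ mass (rwG D z) :=
    le_csSup hbdd (zero_mem_massT hpos hsum hprob hfin hz0 hz1)
  obtain ⟨t, ht1, ht2⟩ := exists_between h
  have ht0 : 0 ≤ t := hm0.trans ht1.le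
  have htrad : t * rad < -Real.log z := by
    rw [lt_div_iff₀ hrad0] at ht2
    linarith
  have htT : t ∈ {t : ℝ | 0 ≤ t ∧ chi (rwG D z) (e1R d t) < ⊤} := by
    refine ⟨ht0, ?_⟩
    have hmem : e1R d t ∈ Omega (rwG D z) := by
      rw [mem_Omega_rwG_iff hpos hsum hprob hfin hz0 hz1]
      have hFF : FF hfin (e1R d t) ≤ Real.exp (t * rad) := by
        refine FF_le_exp hpos hprob hfin _ fun y hy => ?_
        rw [rdotZ_e1R']
        exact mul_le_mul_of_nonneg_left (hradmax y hy) ht0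
      calc z * FF hfin (e1R d t) ≤ z * Real.exp (t * rad) :=
            mul_le_mul_of_nonneg_left hFF hz0.le
        _ < z * Real.exp (-Real.log z) := by
            exact mul_lt_mul_of_pos_left (Real.exp_lt_exp.mpr htrad) hz0
        _ = 1 := by rw [Real.exp_neg, Real.exp_log hz0]; field_simp
    exact hmem
  exact absurd (le_csSup hbdd htT) (not_le.mpr ht1)

end mass
end Statement15Aux2


section Statement15Aux3

set_option linter.unusedSectionVars false

variable {d : ℕ} {D : (Fin d → ℤ) → ℝ}
  (hpos : ∀ x, 0 ≤ D x) (hle : ∀ x, D x ≤ 1) (hsum : Summable D) (hprob : ∑' x, D x = 1)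
  (hfin : {y : Fin d → ℤ | D y ≠ 0}.Finite)
  (hDsupp : ∀ L : AddSubgroup (Fin d → ℤ), (∀ x, D x ≠ 0 → x ∈ L) → L = ⊤)
  (hsymD : ∀ y, D (-y) = D y)
  {Dmin : ℝ} (hDmin0 : 0 < Dmin) (hDminle : ∀ y, D y ≠ 0 → Dmin ≤ D y) (hDmin1 : Dmin ≤ 1)

include hpos hsum hprob hfin hDmin0 hDminle hDmin1 in
lemma num_le (x : Fin d → ℝ) (hxK : x ∈ convexHull ℝ (toR '' {y : Fin d → ℤ | D y ≠ 0}))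
    {z : ℝ} (hz0 : 0 < z) (hz1 : z < 1) :
    sSup ((fun μ => rdot μ x) '' closure (Omega (rwG D z)))
      ≤ -Real.log z - Real.log Dmin := by
  have hβ0 : 0 ≤ -Real.log z - Real.log Dmin := by
    have h1 : Real.log z ≤ 0 := Real.log_nonpos hz0.le hz1.le
    have h2 : Real.log Dmin ≤ 0 := Real.log_nonpos hDmin0.le hDmin1
    linarith
  refine Real.sSup_le ?_ hβ0
  rintro _ ⟨μ, hμ, rfl⟩
  have hhalf : convexHull ℝ (toR '' {y : Fin d → ℤ | D y ≠ 0})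
      ⊆ {v | rdot μ v ≤ -Real.log z - Real.log Dmin} := by
    refine convexHull_min ?_ (convex_halfSpace_le (isLinearMap_rdot μ) _)
    rintro _ ⟨y, hy, rfl⟩
    rw [Set.mem_setOf_eq, rdot_toR']
    exact rdotZ_le_beta hpos hsum hprob hfin hDmin0 hDminle hz0 hz1 hμ hy
  exact hhalf hxK

include hpos hsum hprob hfin hDsupp hsymD hDmin0 hDminle in
lemma num_ge (x ν : Fin d → ℝ) {a : ℝ} (ha : 0 < a) (hνx : rdot ν x = a)
    (hν : ∀ y, D y ≠ 0 → rdotZ ν y ≤ a)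
    {z : ℝ} (hz0 : 0 < z) (hze : z < Real.exp (-1)) :
    -Real.log z - 1 ≤ sSup ((fun μ => rdot μ x) '' closure (Omega (rwG D z))) := by
  have hexp1 : Real.exp (-1 : ℝ) < 1 := by
    rw [show (1:ℝ) = Real.exp 0 by simp]
    exact Real.exp_lt_exp.mpr (by norm_num)
  have hz1 : z < 1 := hze.trans hexp1
  have hlogz : Real.log z < -1 := by
    have := Real.log_lt_log hz0 hze
    rwa [Real.log_exp] at this
  set s : ℝ := (-Real.log z - 1) / a with hs
  have hs0 : 0 ≤ s := div_nonneg (by linarith) ha.le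
  have hsa : s * a = -Real.log z - 1 := by
    rw [hs, div_mul_eq_mul_div, mul_div_assoc, div_self ha.ne', mul_one]
  have hμΩ : s • ν ∈ Omega (rwG D z) := by
    rw [mem_Omega_rwG_iff hpos hsum hprob hfin hz0 hz1]
    have hFF : FF hfin (s • ν) ≤ Real.exp (s * a) := by
      refine FF_le_exp hpos hprob hfin _ fun y hy => ?_
      rw [rdotZ_smul_left]
      exact mul_le_mul_of_nonneg_left (hν y hy) hs0
    calc z * FF hfin (s • ν) ≤ z * Real.exp (s * a) :=
          mul_le_mul_of_nonneg_left hFF hz0.le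
      _ = Real.exp (-1 : ℝ) := by
          rw [hsa, show -Real.log z - 1 = -Real.log z + (-1) by ring, Real.exp_add,
            Real.exp_neg (Real.log z), Real.exp_log hz0, ← mul_assoc,
            mul_inv_cancel₀ hz0.ne', one_mul]
      _ < 1 := hexp1
  have hval : rdot (s • ν) x = -Real.log z - 1 := by
    rw [rdot_smul_left, hνx, hsa]
  rw [← hval]
  exact le_csSup (bddAbove_rdot hpos hsum hprob hfin hDsupp hsymD hDmin0 hDminle hz0 hz1 x)
    ⟨s • ν, subset_closure hμΩ, rfl⟩

include hpos hle hsum hprob hfin hDsupp hsymD hDmin0 hDminle hDmin1 in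
lemma normS_est [NeZero d] {rad : ℝ} (hrad0 : 0 < rad) {ystar : Fin d → ℤ}
    (hystar : D ystar ≠ 0) (hystar0 : ((ystar 0 : ℤ) : ℝ) = rad)
    (hradmax : ∀ y, D y ≠ 0 → ((y 0 : ℤ) : ℝ) ≤ rad)
    (x : Fin d → ℝ) (hxK : x ∈ convexHull ℝ (toR '' {y : Fin d → ℤ | D y ≠ 0}))
    (ν : Fin d → ℝ) {a : ℝ} (ha : 0 < a) (hνx : rdot ν x = a)
    (hν : ∀ y, D y ≠ 0 → rdotZ ν y ≤ a)
    {z : ℝ} (hz0 : 0 < z) (hze : z < Real.exp (-1)) :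
    |normS (rwG D z) x - rad|
      ≤ (1 + -Real.log Dmin + -Real.log (D ystar)) / mass (rwG D z) := by
  have hexp1 : Real.exp (-1 : ℝ) < 1 := by
    rw [show (1:ℝ) = Real.exp 0 by simp]
    exact Real.exp_lt_exp.mpr (by norm_num)
  have hz1 : z < 1 := hze.trans hexp1
  have hlogz : Real.log z < -1 := by
    have := Real.log_lt_log hz0 hze
    rwa [Real.log_exp] at this
  set m := mass (rwG D z) with hm
  set num := sSup ((fun μ => rdot μ x) '' closure (Omega (rwG D z))) with hnum
  have hm1 : -Real.log z / rad ≤ m :=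
    mass_ge hpos hsum hprob hfin hrad0 hystar hystar0 hradmax hz0 hz1
  have hm2 : m ≤ (-Real.log z - Real.log (D ystar)) / rad :=
    mass_le hpos hsum hprob hfin hrad0 hystar hystar0 hz0 hz1
  have hm0 : 0 < m := lt_of_lt_of_le (div_pos (by linarith) hrad0) hm1
  have hn1 : -Real.log z - 1 ≤ num :=
    num_ge hpos hsum hprob hfin hDsupp hsymD hDmin0 hDminle x ν ha hνx hν hz0 hze
  have hn2 : num ≤ -Real.log z - Real.log Dmin :=
    num_le hpos hsum hprob hfin hDmin0 hDminle hDmin1 x hxK hz0 hz1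
  have hrm1 : -Real.log z ≤ rad * m := by
    rw [div_le_iff₀ hrad0] at hm1; linarith
  have hrm2 : rad * m ≤ -Real.log z - Real.log (D ystar) := by
    rw [le_div_iff₀ hrad0] at hm2; linarith
  have hlogDmin : Real.log Dmin ≤ 0 := Real.log_nonpos hDmin0.le hDmin1
  have hlogDy : Real.log (D ystar) ≤ 0 :=
    Real.log_nonpos (hpos ystar) (hle ystar)
  have hkey : |num - rad * m| ≤ 1 + -Real.log Dmin + -Real.log (D ystar) := by
    rw [abs_le]; constructor <;> linarith
  have hnormS : normS (rwG D z) x = num / m := rfl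
  rw [hnormS, show num / m - rad = (num - rad * m) / m by field_simp,
    abs_div, abs_of_pos hm0]
  exact (div_le_div_iff_of_pos_right hm0).mpr hkey

end Statement15Aux3


theorem statement15 (d : ℕ) (hd : 1 ≤ d) (D : (Fin d → ℤ) → ℝ)
    (hD01 : ∀ x, 0 ≤ D x ∧ D x ≤ 1) (hDsym : ZdSymmetric D)
    (hDsummable : Summable D) (hDprob : ∑' x, D x = 1)
    (hDsupp : ∀ L : AddSubgroup (Fin d → ℤ), (∀ x, D x ≠ 0 → x ∈ L) → L = ⊤)
    (hfin : {y : Fin d → ℤ | D y ≠ 0}.Finite)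
    (rad : ℝ)
    (hrad : rad = sSup ((fun y : Fin d → ℤ => rdotZ (e1R d 1) y) '' {y | D y ≠ 0}))
    (hradpos : 0 < rad) :
    (∀ x : Fin d → ℝ, x ∈ frontier (convexHull ℝ (toR '' {y | D y ≠ 0})) →
      ∃ C z₀ : ℝ, 0 < C ∧ 0 < z₀ ∧ z₀ < 1 ∧
        ∀ z ∈ Set.Ioo (0 : ℝ) z₀,
          |normS (rwG D z) x - rad| ≤ C / mass (rwG D z)) ∧
    (∃ N : (Fin d → ℝ) → ℝ,
      (∀ x : Fin d → ℝ,
        Tendsto (fun z => normS (rwG D z) x) (𝓝[>] (0 : ℝ)) (𝓝 (N x))) ∧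
      (∀ x, 0 ≤ N x) ∧ (∀ x, N x = 0 ↔ x = 0) ∧
      (∀ (a : ℝ) (x : Fin d → ℝ), N (a • x) = |a| * N x) ∧
      (∀ x y : Fin d → ℝ, N (x + y) ≤ N x + N y) ∧
      {x : Fin d → ℝ | N x ≤ 1} = rad⁻¹ • convexHull ℝ (toR '' {y | D y ≠ 0})) := by
  classical
  haveI : NeZero d := ⟨by omega⟩
  have hpos : ∀ x, 0 ≤ D x := fun x => (hD01 x).1
  have hle : ∀ x, D x ≤ 1 := fun x => (hD01 x).2
  have hsymD : ∀ y, D (-y) = D y := by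
    intro y
    have h := hDsym.2 (fun _ => true) y
    exact h
  have toR_neg : ∀ y : Fin d → ℤ, toR (-y) = -(toR y) := fun y => funext fun i => by
    simp [toR]
  have hUne : {y : Fin d → ℤ | D y ≠ 0}.Nonempty := by
    by_contra h
    rw [Set.not_nonempty_iff_eq_empty] at h
    have hzero : ∀ y, D y = 0 := by
      intro y
      by_contra hy
      exact absurd (show y ∈ {y : Fin d → ℤ | D y ≠ 0} from hy) (by rw [h]; simp)
    rw [tsum_congr hzero, tsum_zero] at hDprob
    norm_num at hDprob
  have hAne : hfin.toFinset.Nonempty := by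
    obtain ⟨y, hy⟩ := hUne; exact ⟨y, by simpa using hy⟩
  set Dmin : ℝ := hfin.toFinset.inf' hAne D with hDminDef
  have hDmin0 : 0 < Dmin := by
    rw [hDminDef, Finset.lt_inf'_iff]
    intro y hy
    exact lt_of_le_of_ne (hpos y) (Ne.symm (by simpa using hy))
  have hDminle : ∀ y, D y ≠ 0 → Dmin ≤ D y := fun y hy =>
    Finset.inf'_le D (by simpa using hy)
  have hDmin1 : Dmin ≤ 1 := by
    obtain ⟨y, hy⟩ := hUne
    exact (hDminle y hy).trans (hle y)
  -- the maximizer of the first coordinate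
  have hradmem : rad ∈ (fun y : Fin d → ℤ => rdotZ (e1R d 1) y) '' {y | D y ≠ 0} := by
    rw [hrad]
    exact (hUne.image _).csSup_mem (hfin.image _)
  obtain ⟨ystar, hystarU, hystar0'⟩ := hradmem
  have hystarD : D ystar ≠ 0 := hystarU
  have hystar0 : ((ystar 0 : ℤ) : ℝ) = rad := by
    have h2 : rdotZ (e1R d 1) ystar = rad := hystar0'
    rw [← h2, rdotZ_e1R', one_mul]
  have hradmax : ∀ y, D y ≠ 0 → ((y 0 : ℤ) : ℝ) ≤ rad := by
    intro y hy
    have h := le_csSup ((hfin.image (fun y : Fin d → ℤ => rdotZ (e1R d 1) y)).bddAbove)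
      (Set.mem_image_of_mem _ hy)
    rw [← hrad, rdotZ_e1R', one_mul] at h
    exact h
  -- geometry of K
  set Vs : Set (Fin d → ℝ) := toR '' {y : Fin d → ℤ | D y ≠ 0} with hVs
  set K : Set (Fin d → ℝ) := convexHull ℝ Vs with hKdef
  have hVfin : Vs.Finite := hfin.image _
  have hKcomp : IsCompact K := hVfin.isCompact_convexHull ℝ
  have hKcl : IsClosed K := hKcomp.isClosed
  have hc : Convex ℝ K := convex_convexHull ℝ Vs
  have hVneg : -Vs = Vs := by
    ext v
    simp only [Set.mem_neg]
    constructor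
    · rintro ⟨y, hy, hEq⟩
      exact ⟨-y, by simpa [hsymD] using hy, by rw [toR_neg, hEq, neg_neg]⟩
    · rintro ⟨y, hy, hEq⟩
      exact ⟨-y, by simpa [hsymD] using hy, by rw [toR_neg, hEq]⟩
  have hKneg : -K = K := by
    rw [hKdef, ← convexHull_neg, hVneg]
  have hKsymm : ∀ w ∈ K, -w ∈ K := fun w hw => by
    rw [← hKneg]; exact Set.neg_mem_neg.mpr hw
  -- span of Vs is everything
  have htoR_add : ∀ a b : Fin d → ℤ, toR (a + b) = toR a + toR b := fun a b =>
    funext fun i => by simp [toR]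
  have htoR_zero : toR (0 : Fin d → ℤ) = 0 := funext fun i => by simp [toR]
  have htoR_span : ∀ v : Fin d → ℤ, toR v ∈ Submodule.span ℝ Vs := by
    intro v
    have hv : v ∈ AddSubgroup.closure {y : Fin d → ℤ | D y ≠ 0} := by
      rw [hDsupp (AddSubgroup.closure {y | D y ≠ 0}) fun x hx => AddSubgroup.subset_closure hx]
      trivial
    refine AddSubgroup.closure_induction
      (p := fun v _ => toR v ∈ Submodule.span ℝ Vs) ?_ ?_ ?_ ?_ hv
    · intro y hy; exact Submodule.subset_span ⟨y, hy, rfl⟩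
    · show toR (0 : Fin d → ℤ) ∈ Submodule.span ℝ Vs
      rw [htoR_zero]; exact Submodule.zero_mem _
    · intro a b _ _ ha hb
      show toR (a + b) ∈ Submodule.span ℝ Vs
      rw [htoR_add]; exact Submodule.add_mem _ ha hb
    · intro a _ ha
      show toR (-a) ∈ Submodule.span ℝ Vs
      rw [toR_neg]; exact Submodule.neg_mem _ ha
  have hspan_top : Submodule.span ℝ Vs = ⊤ := by
    rw [eq_top_iff]
    intro w _
    have hw : w = ∑ i, w i • (Pi.single i 1 : Fin d → ℝ) := by
      funext j
      rw [Finset.sum_apply]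
      simp [Pi.single_apply]
    rw [hw]
    refine Submodule.sum_mem _ fun i _ => Submodule.smul_mem _ _ ?_
    have h1 : toR (Pi.single i (1:ℤ)) = (Pi.single i 1 : Fin d → ℝ) := by
      funext j
      by_cases h : j = i <;> simp [toR, Pi.single_apply, h]
    rw [← h1]
    exact htoR_span _
  have hVsne : Vs.Nonempty := hUne.image _
  have haffV : affineSpan ℝ Vs = ⊤ := by
    rw [AffineSubspace.affineSpan_eq_top_iff_vectorSpan_eq_top_of_nonempty ℝ (Fin d → ℝ) (Fin d → ℝ) hVsne]
    rw [eq_top_iff, ← hspan_top]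
    refine Submodule.span_le.mpr fun v hv => ?_
    have hnv : -v ∈ Vs := by rw [← hVneg]; exact Set.neg_mem_neg.mpr hv
    have h2v : v -ᵥ (-v) ∈ vectorSpan ℝ Vs := vsub_mem_vectorSpan ℝ hv hnv
    have hvv : v = (2⁻¹ : ℝ) • (v -ᵥ -v) := by
      rw [vsub_eq_sub, sub_neg_eq_add, smul_add]
      rw [← add_smul]
      norm_num
    rw [hvv]
    exact Submodule.smul_mem _ _ h2v
  have haffK : affineSpan ℝ K = ⊤ := by
    rw [eq_top_iff, ← haffV]
    exact affineSpan_mono ℝ (subset_convexHull ℝ Vs)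
  have hint : (interior K).Nonempty :=
    hc.interior_nonempty_iff_affineSpan_eq_top.mpr haffK
  obtain ⟨u, hu⟩ := hint
  have hnu : -u ∈ interior K := by
    have hsub : -interior K ⊆ interior K := by
      apply interior_maximal ?_ isOpen_interior.neg
      intro w hw
      rw [← hKneg]
      exact Set.neg_subset_neg.mpr interior_subset hw
    exact hsub (Set.neg_mem_neg.mpr hu)
  have h0int : (0 : Fin d → ℝ) ∈ interior K := by
    have h := (hc.interior) hu hnu (by norm_num : (0:ℝ) ≤ 1/2)
      (by norm_num : (0:ℝ) ≤ 1/2) (by norm_num)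
    rwa [smul_neg, add_neg_cancel] at h
  have hK0 : K ∈ 𝓝 (0 : Fin d → ℝ) := mem_interior_iff_mem_nhds.mp h0int
  have habs : Absorbent ℝ K := absorbent_nhds_zero hK0
  have hbddK : Bornology.IsVonNBounded ℝ K :=
    NormedSpace.isVonNBounded_of_isBounded ℝ hKcomp.isBounded
  -- supporting functionals
  have hsupport : ∀ x ∈ frontier K, ∃ ν : Fin d → ℝ, 0 < rdot ν x ∧
      ∀ y, D y ≠ 0 → rdotZ ν y ≤ rdot ν x := by
    intro x hx
    obtain ⟨f, hf⟩ := geometric_hahn_banach_open_point hc.interior isOpen_interior hx.2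
    have hfK : ∀ v ∈ K, f v ≤ f x := by
      intro v hv
      have hev : ∀ᶠ t in 𝓝[>] (0:ℝ), f ((1 - t) • v + t • u) ≤ f x := by
        filter_upwards [Ioo_mem_nhdsGT (zero_lt_one)] with t ht
        exact (hf _ (hc.combo_closure_interior_mem_interior (subset_closure hv) hu
          (by linarith [ht.2]) ht.1 (by ring))).le
      have hcontf : Continuous fun t : ℝ => f ((1 - t) • v + t • u) :=
        f.continuous.comp (((continuous_const.sub continuous_id).smul
          continuous_const).add (continuous_id.smul continuous_const))
      have hlim : Tendsto (fun t : ℝ => f ((1 - t) • v + t • u)) (𝓝[>] 0) (𝓝 (f v)) := by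
        have h0 := hcontf.tendsto 0
        simp only [sub_zero, one_smul, zero_smul, add_zero] at h0
        exact h0.mono_left nhdsWithin_le_nhds
      exact le_of_tendsto hlim hev
    have hrep : ∀ w : Fin d → ℝ, rdot (fun i => f (Pi.single i 1)) w = f w := by
      intro w
      have hw : w = ∑ i, w i • (Pi.single i 1 : Fin d → ℝ) := by
        funext j; rw [Finset.sum_apply]; simp [Pi.single_apply]
      conv_rhs => rw [hw]
      rw [map_sum, rdot]
      refine Finset.sum_congr rfl fun i _ => ?_
      rw [f.map_smul, smul_eq_mul]
      exact mul_comm _ _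
    refine ⟨fun i => f (Pi.single i 1), ?_, ?_⟩
    · rw [hrep]
      have h0 := hf 0 h0int
      simpa using h0
    · intro y hy
      rw [← rdot_toR', hrep, hrep]
      exact hfK _ (subset_convexHull ℝ Vs ⟨y, hy, rfl⟩)
  set C0 : ℝ := 1 + -Real.log Dmin + -Real.log (D ystar) with hC0
  have hlogDmin : Real.log Dmin ≤ 0 := Real.log_nonpos hDmin0.le hDmin1
  have hlogDy : Real.log (D ystar) ≤ 0 := Real.log_nonpos (hpos ystar) (hle ystar)
  have hC0pos : 0 < C0 := by rw [hC0]; linarith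
  have hexp1 : Real.exp (-1 : ℝ) < 1 := by
    rw [show (1:ℝ) = Real.exp 0 by simp]
    exact Real.exp_lt_exp.mpr (by norm_num)
  -- the uniform estimate on the frontier
  have part1 : ∀ x ∈ frontier K, ∀ z ∈ Set.Ioo (0:ℝ) (Real.exp (-1)),
      |normS (rwG D z) x - rad| ≤ C0 / mass (rwG D z) := by
    intro x hx z hz
    obtain ⟨ν, hν1, hν2⟩ := hsupport x hx
    exact normS_est hpos hle hDsummable hDprob hfin hDsupp hsymD hDmin0 hDminle hDmin1
      hradpos hystarD hystar0 hradmax x (hKcl.frontier_subset hx) ν hν1 rfl hν2 hz.1 hz.2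
  constructor
  · intro x hx
    exact ⟨C0, Real.exp (-1), hC0pos, Real.exp_pos _, hexp1, fun z hz => part1 x hx z hz⟩
  -- Part 2: the limiting norm
  · refine ⟨fun x => rad * gauge K x, ?_, ?_, ?_, ?_, ?_, ?_⟩
    · -- tendsto
      intro x
      by_cases hx0 : x = 0
      · subst hx0
        have hevzero : ∀ᶠ z in 𝓝[>] (0:ℝ), normS (rwG D z) 0 = 0 := by
          filter_upwards [Ioo_mem_nhdsGT (zero_lt_one)] with z hz
          have hne : (closure (Omega (rwG D z))).Nonempty :=
            ⟨0, subset_closure (zero_mem_Omega_rwG hpos hDsummable hDprob hfin hz.1 hz.2)⟩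
          have himg : (fun μ => rdot μ (0 : Fin d → ℝ)) '' closure (Omega (rwG D z)) = {0} := by
            rw [show (fun μ : Fin d → ℝ => rdot μ 0) = fun _ => (0:ℝ) from
              funext fun μ => by simp [rdot]]
            exact hne.image_const 0
          rw [normS, himg, csSup_singleton, zero_div]
        have hgoal : Tendsto (fun z => normS (rwG D z) 0) (𝓝[>] (0:ℝ)) (𝓝 0) :=
          Tendsto.congr' (hevzero.mono fun z h => h.symm) tendsto_const_nhds
        simpa [gauge_zero] using hgoal
      · have hgpos : 0 < gauge K x := (gauge_pos habs hbddK).mpr hx0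
        set g : ℝ := gauge K x with hg
        set xh : Fin d → ℝ := g⁻¹ • x with hxh
        have hgxh : gauge K xh = 1 := by
          rw [hxh, gauge_smul_of_nonneg (inv_nonneg.mpr hgpos.le), smul_eq_mul, ← hg,
            inv_mul_cancel₀ hgpos.ne']
        have hxhfr : xh ∈ frontier K := (gauge_eq_one_iff_mem_frontier hc hK0).mp hgxh
        have hmasstop : Tendsto (fun z => mass (rwG D z)) (𝓝[>] (0:ℝ)) atTop := by
          have hlow : ∀ᶠ z in 𝓝[>] (0:ℝ), -Real.log z / rad ≤ mass (rwG D z) := by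
            filter_upwards [Ioo_mem_nhdsGT (zero_lt_one)] with z hz
            exact mass_ge hpos hDsummable hDprob hfin hradpos hystarD hystar0 hradmax hz.1 hz.2
          have hlog : Tendsto (fun z : ℝ => -Real.log z / rad) (𝓝[>] (0:ℝ)) atTop := by
            refine Tendsto.atTop_div_const hradpos ?_
            exact tendsto_neg_atBot_atTop.comp Real.tendsto_log_nhdsGT_zero
          exact tendsto_atTop_mono' _ hlow hlog
        have hCm : Tendsto (fun z => C0 / mass (rwG D z)) (𝓝[>] (0:ℝ)) (𝓝 0) :=
          Tendsto.div_atTop tendsto_const_nhds hmasstop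
        have hxhlim : Tendsto (fun z => normS (rwG D z) xh) (𝓝[>] (0:ℝ)) (𝓝 rad) := by
          have hsq : Tendsto (fun z => normS (rwG D z) xh - rad) (𝓝[>] (0:ℝ)) (𝓝 0) := by
            refine squeeze_zero_norm' ?_ hCm
            filter_upwards [Ioo_mem_nhdsGT (Real.exp_pos (-1))] with z hz
            simpa using part1 xh hxhfr z hz
          have h := hsq.add_const rad
          simpa using h
        have hevscale : ∀ᶠ z in 𝓝[>] (0:ℝ),
            normS (rwG D z) x = g * normS (rwG D z) xh := by
          filter_upwards [Ioo_mem_nhdsGT (zero_lt_one)] with z hz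
          have hxeq : x = g • xh := by
            rw [hxh, smul_smul, mul_inv_cancel₀ hgpos.ne', one_smul]
          have hne : (closure (Omega (rwG D z))).Nonempty :=
            ⟨0, subset_closure (zero_mem_Omega_rwG hpos hDsummable hDprob hfin hz.1 hz.2)⟩
          have hbdd := bddAbove_rdot hpos hDsummable hDprob hfin hDsupp hsymD hDmin0
            hDminle hz.1 hz.2 xh
          have himg2 : (fun μ => rdot μ x) '' closure (Omega (rwG D z))
              = (fun t => g * t) '' ((fun μ => rdot μ xh) '' closure (Omega (rwG D z))) := by
            rw [← Set.image_comp]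
            refine Set.image_congr fun μ _ => ?_
            show rdot μ x = g * rdot μ xh
            conv_lhs => rw [hxeq]
            rw [rdot_smul']
          rw [normS, normS, himg2, csSup_mul_image hgpos.le (hne.image _) hbdd, mul_div_assoc]
        have hfinal := Tendsto.congr' (hevscale.mono fun z h => h.symm) (hxhlim.const_mul g)
        have hgr : g * rad = rad * gauge K x := by rw [hg]; ring
        rw [hgr] at hfinal
        exact hfinal
    · intro x
      exact mul_nonneg hradpos.le (gauge_nonneg x)
    · intro x
      show rad * gauge K x = 0 ↔ x = 0
      rw [mul_eq_zero]
      constructor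
      · rintro (h | h)
        · exact absurd h hradpos.ne'
        · exact (gauge_eq_zero habs hbddK).mp h
      · rintro rfl
        exact Or.inr gauge_zero
    · intro a x
      show rad * gauge K (a • x) = |a| * (rad * gauge K x)
      rcases le_or_gt 0 a with ha | ha
      · rw [gauge_smul_of_nonneg ha, smul_eq_mul, abs_of_nonneg ha]; ring
      · have hax : a • x = -((-a) • x) := by rw [neg_smul, neg_neg]
        rw [hax, gauge_neg hKsymm, gauge_smul_of_nonneg (by linarith : (0:ℝ) ≤ -a),
          smul_eq_mul, abs_of_neg ha]
        ring
    · intro x y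
      show rad * gauge K (x + y) ≤ rad * gauge K x + rad * gauge K y
      have h := gauge_add_le hc habs x y
      have h2 := mul_le_mul_of_nonneg_left h hradpos.le
      rw [mul_add] at h2
      exact h2
    · ext x
      simp only [Set.mem_setOf_eq]
      rw [Set.mem_smul_set_iff_inv_smul_mem₀ (inv_ne_zero hradpos.ne') _ _, inv_inv]
      have hmem_iff : (rad • x ∈ K) ↔ gauge K (rad • x) ≤ 1 := by
        rw [gauge_le_one_iff_mem_closure hc hK0, hKcl.closure_eq]
      rw [hmem_iff, gauge_smul_of_nonneg hradpos.le, smul_eq_mul]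


end OZpaper
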